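/- arXiv:2511.10421 — 2 statements merged into one kernel-verified Lean document; each statement's English description precedes it below -/
import Mathlib

section
/- Let f : ℝ^n → ℝ have ν-Hölder continuous gradient with constant L_ν for ν ∈ (0,1], g proper lsc, p = 1 + ν, φ := f + g. If 0 < γ < μ < 1/L_ν, then for every x ∈ ℝ^n: inf_z φ(z) ≤ F_μ(x) ≤ F_γ(x) ≤ φ(x), where F_γ denotes the high-order forward–backward envelope with parameter γ. -/
open Real
open scoped RealInnerProductSpace

lemma descent_lemma {n : ℕ} {ν L : ℝ} (hν : 0 < ν) (hν1 : ν ≤ 1) (hL : 0 < L)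
    (f : EuclideanSpace ℝ (Fin n) → ℝ) (hf : Differentiable ℝ f)
    (hH : ∀ x y : EuclideanSpace ℝ (Fin n),
      ‖gradient f y - gradient f x‖ ≤ L * ‖y - x‖ ^ ν)
    (x y : EuclideanSpace ℝ (Fin n)) :
    f y ≤ f x + ⟪gradient f x, y - x⟫ + L / (1 + ν) * ‖y - x‖ ^ (1 + ν) := by
  have hp0 : (0:ℝ) < 1 + ν := by linarith
  rcases eq_or_ne y x with rfl | hyx
  · simp [Real.zero_rpow hp0.ne']
  have hny : (0:ℝ) < ‖y - x‖ := by
    rw [norm_pos_iff]; exact sub_ne_zero.mpr hyx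
  set v := y - x with hv
  set F : ℝ → ℝ := fun t =>
    f (x + t • v) - t * ⟪gradient f x, v⟫ - L / (1 + ν) * t ^ (1 + ν) * ‖v‖ ^ (1 + ν) with hF
  have line : ∀ t : ℝ, HasDerivAt (fun s : ℝ => x + s • v) v t := by
    intro t
    simpa using ((hasDerivAt_id t).smul_const v).const_add x
  have hfd : ∀ t : ℝ, HasDerivAt (fun s => f (x + s • v))
      ⟪gradient f (x + t • v), v⟫ t := by
    intro t
    have h1 := (hf (x + t • v)).hasGradientAt
    have h2 := h1.hasFDerivAt.comp_hasDerivAt t (line t)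
    refine h2.congr_deriv ?_
    simp
  have hFd : ∀ t : ℝ, HasDerivAt F
      (⟪gradient f (x + t • v), v⟫ - ⟪gradient f x, v⟫ - L * t ^ ν * ‖v‖ ^ (1 + ν)) t := by
    intro t
    have h1 : HasDerivAt (fun t : ℝ => t ^ (1 + ν)) ((1 + ν) * t ^ ν) t := by
      have := Real.hasDerivAt_rpow_const (x := t) (p := 1 + ν) (Or.inr (by linarith))
      simpa using this
    have h2 : HasDerivAt (fun t : ℝ => L / (1 + ν) * t ^ (1 + ν) * ‖v‖ ^ (1 + ν))
        (L * t ^ ν * ‖v‖ ^ (1 + ν)) t := by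
      have := ((h1.const_mul (L / (1 + ν))).mul_const (‖v‖ ^ (1 + ν)))
      refine this.congr_deriv ?_
      field_simp
    have h3 : HasDerivAt (fun t : ℝ => t * ⟪gradient f x, v⟫) ⟪gradient f x, v⟫ t := by
      simpa using (hasDerivAt_id t).mul_const ⟪gradient f x, v⟫
    exact ((hfd t).sub h3).sub h2
  have hanti : AntitoneOn F (Set.Icc 0 1) := by
    apply antitoneOn_of_deriv_nonpos (convex_Icc 0 1)
    · exact (Differentiable.continuous (fun t => (hFd t).differentiableAt)).continuousOn
    · intro t _
      exact (hFd t).differentiableAt.differentiableWithinAt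
    · intro t ht
      rw [interior_Icc] at ht
      rw [(hFd t).deriv]
      have hb : ⟪gradient f (x + t • v), v⟫ - ⟪gradient f x, v⟫ ≤ L * t ^ ν * ‖v‖ ^ (1 + ν) := by
        rw [← inner_sub_left]
        calc ⟪gradient f (x + t • v) - gradient f x, v⟫
            ≤ ‖gradient f (x + t • v) - gradient f x‖ * ‖v‖ := real_inner_le_norm _ _
          _ ≤ (L * ‖(x + t • v) - x‖ ^ ν) * ‖v‖ := by
              apply mul_le_mul_of_nonneg_right (hH x _) (norm_nonneg _)
          _ = L * t ^ ν * ‖v‖ ^ (1 + ν) := by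
              rw [add_sub_cancel_left, norm_smul, Real.norm_eq_abs,
                abs_of_pos ht.1, Real.mul_rpow ht.1.le (norm_nonneg _),
                Real.rpow_add hny 1 ν, Real.rpow_one]
              ring
      linarith
  have key := hanti (Set.mem_Icc.mpr ⟨le_refl 0, zero_le_one⟩)
    (Set.mem_Icc.mpr ⟨zero_le_one, le_refl 1⟩) zero_le_one
  have hF0 : F 0 = f x := by
    simp [hF, Real.zero_rpow hp0.ne']
  have hF1 : F 1 = f y - ⟪gradient f x, v⟫ - L / (1 + ν) * ‖v‖ ^ (1 + ν) := by
    simp only [hF, Real.one_rpow, one_smul, hv, one_mul, mul_one]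
    rw [add_sub_cancel]
  rw [hF0, hF1] at key
  linarith

/-- Monotonicity chain: `inf φ ≤ F_μ(x) ≤ F_γ(x) ≤ φ(x)` for `0 < γ < μ < 1/L`. -/
theorem stmt8 (n : ℕ) (ν L : ℝ) (hν : ν ∈ Set.Ioc (0 : ℝ) 1) (hL : 0 < L)
    (f : EuclideanSpace ℝ (Fin n) → ℝ) (hf : Differentiable ℝ f)
    (hH : ∀ x y : EuclideanSpace ℝ (Fin n),
      ‖gradient f y - gradient f x‖ ≤ L * ‖y - x‖ ^ ν)
    (g : EuclideanSpace ℝ (Fin n) → EReal)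
    (hproper_top : ∃ x, g x ≠ ⊤) (hproper_bot : ∀ x, g x ≠ ⊥)
    (hlsc : LowerSemicontinuous g)
    (p : ℝ) (hp : p = 1 + ν)
    (γ μ : ℝ) (hγ : 0 < γ) (hγμ : γ < μ) (hμ : μ < 1 / L)
    (x : EuclideanSpace ℝ (Fin n)) :
    (⨅ z : EuclideanSpace ℝ (Fin n), ((f z : ℝ) : EReal) + g z) ≤
      (⨅ y : EuclideanSpace ℝ (Fin n),
        ((f x + ⟪gradient f x, y - x⟫ + 1 / (p * μ) * ‖x - y‖ ^ p : ℝ) : EReal) + g y) ∧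
    (⨅ y : EuclideanSpace ℝ (Fin n),
        ((f x + ⟪gradient f x, y - x⟫ + 1 / (p * μ) * ‖x - y‖ ^ p : ℝ) : EReal) + g y) ≤
      (⨅ y : EuclideanSpace ℝ (Fin n),
        ((f x + ⟪gradient f x, y - x⟫ + 1 / (p * γ) * ‖x - y‖ ^ p : ℝ) : EReal) + g y) ∧
    (⨅ y : EuclideanSpace ℝ (Fin n),
        ((f x + ⟪gradient f x, y - x⟫ + 1 / (p * γ) * ‖x - y‖ ^ p : ℝ) : EReal) + g y) ≤
      ((f x : ℝ) : EReal) + g x := by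
  obtain ⟨hν0, hν1⟩ := hν
  have hμ0 : 0 < μ := hγ.trans hγμ
  have hp0 : 0 < p := by rw [hp]; linarith
  refine ⟨?_, ?_, ?_⟩
  · -- inf φ ≤ F_μ
    refine le_iInf fun y => ?_
    refine iInf_le_of_le y ?_
    have hfle : f y ≤ f x + ⟪gradient f x, y - x⟫ + 1 / (p * μ) * ‖x - y‖ ^ p := by
      have hd := descent_lemma hν0 hν1 hL f hf hH x y
      rw [← hp] at hd
      have hLμ : L ≤ 1 / μ := by
        rw [le_div_iff₀ hμ0]
        rw [lt_div_iff₀ hL] at hμ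
        linarith
      have : L / p * ‖y - x‖ ^ p ≤ 1 / (p * μ) * ‖x - y‖ ^ p := by
        rw [norm_sub_rev x y]
        apply mul_le_mul_of_nonneg_right _ (Real.rpow_nonneg (norm_nonneg _) _)
        rw [div_le_iff₀ hp0] at *
        have : 1 / (p * μ) * p = 1 / μ := by field_simp
        rw [this]
        exact hLμ
      linarith
    exact add_le_add_left (EReal.coe_le_coe_iff.mpr hfle) (g y)
  · -- F_μ ≤ F_γ
    refine iInf_mono fun y => ?_
    refine add_le_add_left (EReal.coe_le_coe_iff.mpr ?_) (g y)
    have : 1 / (p * μ) * ‖x - y‖ ^ p ≤ 1 / (p * γ) * ‖x - y‖ ^ p := by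
      apply mul_le_mul_of_nonneg_right _ (Real.rpow_nonneg (norm_nonneg _) _)
      apply one_div_le_one_div_of_le (by positivity)
      exact mul_le_mul_of_nonneg_left hγμ.le hp0.le
    linarith
  · -- F_γ ≤ φ
    refine iInf_le_of_le x ?_
    refine add_le_add_left (EReal.coe_le_coe_iff.mpr ?_) (g x)
    simp [Real.zero_rpow hp0.ne']
end

section
/- Let f : ℝ^n → ℝ have ν-Hölder continuous gradient with constant L_ν, ν ∈ (0,1], p = 1 + ν, g proper lsc, φ := f + g. If x̄ is a p-calm point of φ with constant M > 0, then g is high-order prox-bounded of order p; more precisely, for any γ > 0 with M + L_ν/p ≤ 1/(pγ), one has φ(x̄) ≤ inf_y { f(x̄) + ⟨∇f(x̄), y − x̄⟩ + g(y) + (1/(pγ))‖y − x̄‖^p }, and hence the high-order Moreau envelope of g is not identically −∞. -/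
open Real
open scoped RealInnerProductSpace
open intervalIntegral

section auxstmt11

variable {n : ℕ}

lemma inner_grad (f : EuclideanSpace ℝ (Fin n) → ℝ) (z v : EuclideanSpace ℝ (Fin n)) :
    ⟪gradient f z, v⟫ = fderiv ℝ f z v := by
  rw [gradient]; exact InnerProductSpace.toDual_symm_apply

lemma grad_cont {ν L : ℝ} (hν : 0 < ν) (f : EuclideanSpace ℝ (Fin n) → ℝ)
    (hH : ∀ x y : EuclideanSpace ℝ (Fin n),
      ‖gradient f y - gradient f x‖ ≤ L * ‖y - x‖ ^ ν) :
    Continuous (gradient f) := by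
  rw [continuous_iff_continuousAt]
  intro z
  rw [ContinuousAt, tendsto_iff_norm_sub_tendsto_zero]
  have h1 : Filter.Tendsto (fun y : EuclideanSpace ℝ (Fin n) => ‖y - z‖) (nhds z) (nhds 0) := by
    have : Continuous fun y : EuclideanSpace ℝ (Fin n) => ‖y - z‖ :=
      (continuous_id.sub continuous_const).norm
    simpa using this.tendsto z
  have h2 : Filter.Tendsto (fun r : ℝ => L * r ^ ν) (nhds 0) (nhds 0) := by
    have := ((Real.continuousAt_rpow_const 0 ν (Or.inr hν.le)).tendsto).const_mul L
    simpa [Real.zero_rpow hν.ne'] using this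
  exact squeeze_zero (fun y => norm_nonneg _) (fun y => hH z y) (h2.comp h1)

lemma descent {ν L : ℝ} (hν : 0 < ν) (f : EuclideanSpace ℝ (Fin n) → ℝ)
    (hf : Differentiable ℝ f)
    (hH : ∀ x y : EuclideanSpace ℝ (Fin n),
      ‖gradient f y - gradient f x‖ ≤ L * ‖y - x‖ ^ ν)
    (x y : EuclideanSpace ℝ (Fin n)) :
    f y ≤ f x + ⟪gradient f x, y - x⟫ + L / (1 + ν) * ‖y - x‖ ^ (1 + ν) := by
  set d := y - x with hd
  have hderiv : ∀ t : ℝ, HasDerivAt (fun t : ℝ => f (x + t • d))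
      (⟪gradient f (x + t • d), d⟫) t := by
    intro t
    have h1 : HasDerivAt (fun t : ℝ => x + t • d) d t := by
      simpa using ((hasDerivAt_id t).smul_const d).const_add x
    have h2 := (hf (x + t • d)).hasFDerivAt.comp_hasDerivAt t h1
    rw [inner_grad]
    exact h2
  have hgc := grad_cont hν f hH
  have hcont : Continuous fun t : ℝ => ⟪gradient f (x + t • d), d⟫ := by
    apply Continuous.inner _ continuous_const
    exact hgc.comp (continuous_const.add (continuous_id.smul continuous_const))
  have hint : IntervalIntegrable (fun t : ℝ => ⟪gradient f (x + t • d), d⟫)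
      MeasureTheory.volume 0 1 := hcont.intervalIntegrable 0 1
  have key : ∫ t in (0:ℝ)..1, ⟪gradient f (x + t • d), d⟫
      = f y - f x := by
    rw [intervalIntegral.integral_eq_sub_of_hasDerivAt (fun t _ => hderiv t) hint]
    simp [hd]
  have hbound : ∀ t ∈ Set.Icc (0:ℝ) 1,
      ⟪gradient f (x + t • d), d⟫ - ⟪gradient f x, d⟫ ≤ L * ‖d‖ ^ (1 + ν) * t ^ ν := by
    intro t ht
    have h1 : ⟪gradient f (x + t • d) - gradient f x, d⟫
        = ⟪gradient f (x + t • d), d⟫ - ⟪gradient f x, d⟫ := by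
      rw [inner_sub_left]
    have h2 : |⟪gradient f (x + t • d) - gradient f x, d⟫| ≤
        ‖gradient f (x + t • d) - gradient f x‖ * ‖d‖ := abs_real_inner_le_norm _ _
    have h3 : ‖gradient f (x + t • d) - gradient f x‖ ≤ L * (t ^ ν * ‖d‖ ^ ν) := by
      have := hH x (x + t • d)
      simpa [norm_smul, abs_of_nonneg ht.1,
        Real.mul_rpow ht.1 (norm_nonneg d)] using this
    have h4 : ‖gradient f (x + t • d) - gradient f x‖ * ‖d‖ ≤ L * ‖d‖ ^ (1 + ν) * t ^ ν := by
      calc ‖gradient f (x + t • d) - gradient f x‖ * ‖d‖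
          ≤ (L * (t ^ ν * ‖d‖ ^ ν)) * ‖d‖ := by
            apply mul_le_mul_of_nonneg_right h3 (norm_nonneg d)
        _ = L * ‖d‖ ^ (1 + ν) * t ^ ν := by
            rw [Real.rpow_add' (norm_nonneg d) (by positivity), Real.rpow_one]; ring
    nlinarith [abs_le.mp (h1 ▸ h2), h4]
  have hint2 : IntervalIntegrable (fun t : ℝ => L * ‖d‖ ^ (1 + ν) * t ^ ν)
      MeasureTheory.volume 0 1 :=
    (intervalIntegral.intervalIntegrable_rpow' (by linarith)).const_mul _
  have hint3 : IntervalIntegrable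
      (fun t : ℝ => ⟪gradient f (x + t • d), d⟫ - ⟪gradient f x, d⟫)
      MeasureTheory.volume 0 1 := hint.sub intervalIntegrable_const
  have hmono := intervalIntegral.integral_mono_on (by norm_num : (0:ℝ) ≤ 1) hint3 hint2 hbound
  have e1 : ∫ t in (0:ℝ)..1, L * ‖d‖ ^ (1 + ν) * t ^ ν
      = L * ‖d‖ ^ (1 + ν) / (1 + ν) := by
    rw [intervalIntegral.integral_const_mul, integral_rpow (Or.inl (by linarith))]
    rw [Real.one_rpow, Real.zero_rpow (by linarith)]
    ring
  have e2 : ∫ t in (0:ℝ)..1, (⟪gradient f (x + t • d), d⟫ - ⟪gradient f x, d⟫)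
      = (f y - f x) - ⟪gradient f x, d⟫ := by
    rw [intervalIntegral.integral_sub hint intervalIntegrable_const, key]
    simp
  rw [e1, e2] at hmono
  have : L / (1 + ν) * ‖d‖ ^ (1 + ν) = L * ‖d‖ ^ (1 + ν) / (1 + ν) := by ring
  linarith

end auxstmt11

/-- If `xb` is a `p`-calm point of `φ = f + g`, then `φ(xb) ≤ F_γ(xb)` whenever
`M + L/p ≤ 1/(pγ)`, and hence `g` is high-order prox-bounded of order `p`. -/
theorem stmt11 (n : ℕ) (ν L : ℝ) (hν : ν ∈ Set.Ioc (0 : ℝ) 1) (hL : 0 < L)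
    (f : EuclideanSpace ℝ (Fin n) → ℝ) (hf : Differentiable ℝ f)
    (hH : ∀ x y : EuclideanSpace ℝ (Fin n),
      ‖gradient f y - gradient f x‖ ≤ L * ‖y - x‖ ^ ν)
    (g : EuclideanSpace ℝ (Fin n) → EReal)
    (hproper_top : ∃ x, g x ≠ ⊤) (hproper_bot : ∀ x, g x ≠ ⊥)
    (hlsc : LowerSemicontinuous g)
    (p : ℝ) (hp : p = 1 + ν)
    (xb : EuclideanSpace ℝ (Fin n)) (hdom : g xb ≠ ⊤)
    (M : ℝ) (hM : 0 < M)
    (hcalm : ∀ x, x ≠ xb →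
      ((f xb : ℝ) : EReal) + g xb < ((f x : ℝ) : EReal) + g x + ((M * ‖x - xb‖ ^ p : ℝ) : EReal)) :
    (∀ γ : ℝ, 0 < γ → M + L / p ≤ 1 / (p * γ) →
      ((f xb : ℝ) : EReal) + g xb ≤
        ⨅ y : EuclideanSpace ℝ (Fin n),
          ((f xb + ⟪gradient f xb, y - xb⟫ + 1 / (p * γ) * ‖y - xb‖ ^ p : ℝ) : EReal) + g y) ∧
    (∃ γ : ℝ, 0 < γ ∧ ∃ x : EuclideanSpace ℝ (Fin n),
      ⊥ < ⨅ y : EuclideanSpace ℝ (Fin n),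
            g y + ((1 / (p * γ) * ‖x - y‖ ^ p : ℝ) : EReal)) := by
  obtain ⟨hν0, hν1⟩ := hν
  have hp1 : 1 < p := by rw [hp]; linarith
  have hp0 : 0 < p := by linarith
  have hdes : ∀ y, f y ≤ f xb + ⟪gradient f xb, y - xb⟫ + L / p * ‖y - xb‖ ^ p := by
    intro y
    have := descent hν0 f hf hH xb y
    rw [hp]; exact this
  set tg := (g xb).toReal with htg
  have hgxb : g xb = ((tg : ℝ) : EReal) := (EReal.coe_toReal hdom (hproper_bot xb)).symm
  -- real version of calmness (non-strict, includes y = xb)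
  have hcalmR : ∀ y (ty : ℝ), g y = ((ty : ℝ) : EReal) →
      f xb + tg ≤ f y + ty + M * ‖y - xb‖ ^ p := by
    intro y ty hgy
    by_cases hyx : y = xb
    · subst hyx
      rw [hgy] at hgxb
      have hh : ty = tg := by exact_mod_cast hgxb
      simp only [sub_self, norm_zero, Real.zero_rpow hp0.ne', mul_zero, add_zero]
      linarith
    · have hc := hcalm y hyx
      rw [hgy, hgxb, ← EReal.coe_add, ← EReal.coe_add, ← EReal.coe_add] at hc
      exact_mod_cast hc.le
  have hrnn : ∀ y : EuclideanSpace ℝ (Fin n), (0:ℝ) ≤ ‖y - xb‖ ^ p :=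
    fun y => Real.rpow_nonneg (norm_nonneg _) p
  constructor
  · intro γ hγ hγ2
    apply le_iInf
    intro y
    rcases eq_or_ne (g y) ⊤ with hy | hy
    · rw [hy, EReal.coe_add_top]
      exact le_top
    · set ty := (g y).toReal with hty
      have hgy : g y = ((ty : ℝ) : EReal) := (EReal.coe_toReal hy (hproper_bot y)).symm
      rw [hgy, hgxb, ← EReal.coe_add, ← EReal.coe_add, EReal.coe_le_coe_iff]
      have h1 := hcalmR y ty hgy
      have h2 := hdes y
      have h3 : abs ⟪gradient f xb, y - xb⟫ ≤ ‖gradient f xb‖ * ‖y - xb‖ :=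
        abs_real_inner_le_norm _ _
      have h4 : (M + L / p) * ‖y - xb‖ ^ p ≤ 1 / (p * γ) * ‖y - xb‖ ^ p :=
        mul_le_mul_of_nonneg_right hγ2 (hrnn y)
      nlinarith [hrnn y]
  · set G := ‖gradient f xb‖ with hG
    have hG0 : 0 ≤ G := norm_nonneg _
    set c := M + L / p + G + 1 with hc
    have hc0 : 0 < c := by positivity
    refine ⟨1 / (p * c), by positivity, xb, ?_⟩
    have hcval : 1 / (p * (1 / (p * c))) = c := by
      field_simp
    clear_value c
    refine lt_of_lt_of_le (EReal.bot_lt_coe (tg - G)) (le_iInf fun y => ?_)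
    rcases eq_or_ne (g y) ⊤ with hy | hy
    · rw [hy, EReal.top_add_coe]
      exact le_top
    · set ty := (g y).toReal with hty
      have hgy : g y = ((ty : ℝ) : EReal) := (EReal.coe_toReal hy (hproper_bot y)).symm
      rw [hgy, ← EReal.coe_add, EReal.coe_le_coe_iff, hcval]
      have h1 := hcalmR y ty hgy
      have h2 := hdes y
      have h3 : ⟪gradient f xb, y - xb⟫ ≤ G * ‖y - xb‖ :=
        le_trans (le_abs_self _) (abs_real_inner_le_norm _ _)
      have h5 : ‖y - xb‖ ≤ 1 + ‖y - xb‖ ^ p := by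
        rcases le_or_gt ‖y - xb‖ 1 with h | h
        · linarith [hrnn y]
        · have : ‖y - xb‖ ^ (1:ℝ) ≤ ‖y - xb‖ ^ p :=
            Real.rpow_le_rpow_of_exponent_le h.le hp1.le
          rw [Real.rpow_one] at this
          linarith
      have h6 : ‖xb - y‖ = ‖y - xb‖ := norm_sub_rev _ _
      rw [h6]
      have h7 : G * ‖y - xb‖ ≤ G + G * ‖y - xb‖ ^ p := by nlinarith [h5, hG0]
      have h8 : c * ‖y - xb‖ ^ p
          = M * ‖y - xb‖ ^ p + L / p * ‖y - xb‖ ^ p + G * ‖y - xb‖ ^ p + ‖y - xb‖ ^ p := by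
        rw [hc]; ring
      linarith [h1, h2, h3, h7, h8, hrnn y]
end
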